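/- arXiv:1209.1363 — 3 statements merged into one kernel-verified Lean document; each statement's English description precedes it below -/
import Mathlib

section
/- Let (a_n)_{n≥1} be a real sequence with nonnegative Boolean transform, and let (w_n)_{n≥1} be a weakly decreasing real sequence with w_1 ≤ 1. Then every coefficient of the formal power series (1 + ∑_{n≥1} a_n x^n)/(1 + ∑_{n≥1} w_n a_n x^n) is nonnegative. -/
/-! Write `A = 1 + ∑ aₙxⁿ`, `B = ∑ bₙxⁿ` and `W = 1 + ∑ wₙaₙxⁿ`. The Boolean transform says
`A = (1 - B)⁻¹`, so the series in question is `((1 - B) W)⁻¹`. The recursion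
`aₙ = bₙ + ∑ a_{n-k} b_k` gives `aₙ ≥ 0`, and then `wₙ ≤ min 1 w_{n-k}` shows that every
nonconstant coefficient of `(1 - B) W` is `≤ 0`. The recursion for the coefficients of an inverse
turns such a series, with constant term `1`, into one with nonnegative coefficients. -/

open PowerSeries Finset

section

variable {R : Type*}

noncomputable def onePlusSeries [Semiring R] (a : ℕ → R) : R⟦X⟧ :=
  1 + mk fun i => if i = 0 then 0 else a i

theorem coeff_onePlusSeries [Semiring R] (a : ℕ → R) (n : ℕ) :
    coeff n (onePlusSeries a) = if n = 0 then 1 else a n := by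
  rcases eq_or_ne n 0 with rfl | hn <;> simp [onePlusSeries, coeff_one, *]

@[simp]
theorem constantCoeff_onePlusSeries [Semiring R] (a : ℕ → R) :
    constantCoeff (onePlusSeries a) = 1 := by
  simpa using coeff_onePlusSeries a 0

theorem coeff_onePlusSeries_mul [CommSemiring R] (u v : ℕ → R) {n : ℕ} (hn : 1 ≤ n) :
    coeff n (onePlusSeries u * onePlusSeries v) =
      u n + v n + ∑ k ∈ Ico 1 n, u k * v (n - k) := by
  rw [coeff_mul, Nat.sum_antidiagonal_eq_sum_range_succ_mk, sum_range_succ,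
    range_eq_Ico, sum_eq_sum_Ico_succ_bot (by omega)]
  have hmid : ∀ k ∈ Ico 1 n, coeff k (onePlusSeries u) * coeff (n - k) (onePlusSeries v) =
      u k * v (n - k) := fun k hk => by
    rw [mem_Ico] at hk
    rw [coeff_onePlusSeries, coeff_onePlusSeries, if_neg (by omega), if_neg (by omega)]
  rw [sum_congr rfl hmid]
  simp only [coeff_onePlusSeries, Nat.sub_zero, Nat.sub_self, if_pos, if_neg (by omega : n ≠ 0)]
  ring

theorem coeff_inv_nonneg_of_coeff_nonpos {k : Type*} [Field k] [LinearOrder k]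
    [IsStrictOrderedRing k] {φ : k⟦X⟧} (h0 : 0 < constantCoeff φ)
    (h : ∀ n, 1 ≤ n → coeff n φ ≤ 0) (n : ℕ) : 0 ≤ coeff n φ⁻¹ := by
  induction n using Nat.strong_induction_on with
  | _ n ih =>
  rw [coeff_inv]
  split_ifs with hn
  · positivity
  · refine mul_nonneg_of_nonpos_of_nonpos (neg_nonpos.2 (inv_nonneg.2 h0.le))
      (sum_nonpos fun p hp => ?_)
    rw [HasAntidiagonal.mem_antidiagonal] at hp
    split_ifs with hlt
    · exact mul_nonpos_of_nonpos_of_nonneg (h _ (by omega)) (ih _ hlt)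
    · rfl

section BooleanTransform

variable {a b : ℕ → R}

theorem onePlusSeries_neg_mul_onePlusSeries_of_boolean_transform [CommRing R]
    (hb : ∀ n, 1 ≤ n → b n = a n - ∑ k ∈ Ico 1 n, a (n - k) * b k) :
    onePlusSeries (-b) * onePlusSeries a = 1 := by
  ext n
  rcases Nat.eq_zero_or_pos n with rfl | hn
  · simp
  · rw [coeff_onePlusSeries_mul _ _ hn, coeff_one, if_neg hn.ne']
    simp only [Pi.neg_apply, neg_mul, sum_neg_distrib, mul_comm (b _)]
    rw [hb n hn]
    ring

theorem nonneg_of_boolean_transform_nonneg [CommRing R] [PartialOrder R] [IsOrderedRing R]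
    (hb : ∀ n, 1 ≤ n → b n = a n - ∑ k ∈ Ico 1 n, a (n - k) * b k)
    (hb0 : ∀ n, 1 ≤ n → 0 ≤ b n) (n : ℕ) (hn : 1 ≤ n) : 0 ≤ a n := by
  induction n using Nat.strong_induction_on with
  | _ n ih =>
  have ha : a n = b n + ∑ k ∈ Ico 1 n, a (n - k) * b k := by rw [hb n hn]; ring
  rw [ha]
  refine add_nonneg (hb0 n hn) (sum_nonneg fun k hk => ?_)
  rw [mem_Ico] at hk
  exact mul_nonneg (ih _ (by omega) (by omega)) (hb0 k hk.1)

theorem coeff_onePlusSeries_neg_mul_weighted_nonpos [CommRing R] [LinearOrder R]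
    [IsStrictOrderedRing R] {w : ℕ → R}
    (hb : ∀ n, 1 ≤ n → b n = a n - ∑ k ∈ Ico 1 n, a (n - k) * b k)
    (hb0 : ∀ n, 1 ≤ n → 0 ≤ b n) (hw : ∀ m n, 1 ≤ m → m ≤ n → w n ≤ w m) (hw1 : w 1 ≤ 1)
    {n : ℕ} (hn : 1 ≤ n) :
    coeff n (onePlusSeries (-b) * onePlusSeries fun i => w i * a i) ≤ 0 := by
  have ha : a n = b n + ∑ k ∈ Ico 1 n, a (n - k) * b k := by rw [hb n hn]; ring
  have hwa : w n * a n ≤ b n + ∑ k ∈ Ico 1 n, w (n - k) * a (n - k) * b k := by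
    rw [ha, mul_add, mul_sum]
    refine add_le_add (mul_le_of_le_one_left (hb0 n hn) ((hw 1 n le_rfl hn).trans hw1))
      (sum_le_sum fun k hk => ?_)
    rw [mem_Ico] at hk
    rw [← mul_assoc]
    exact mul_le_mul_of_nonneg_right
      (mul_le_mul_of_nonneg_right (hw _ _ (by omega) (by omega))
        (nonneg_of_boolean_transform_nonneg hb hb0 _ (by omega))) (hb0 k hk.1)
  rw [coeff_onePlusSeries_mul _ _ hn]
  simp only [Pi.neg_apply, neg_mul, sum_neg_distrib, mul_comm (b _)]
  linarith

end BooleanTransform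

end

/-- If the real sequence `(a n)` has nonnegative Boolean transform
`(b n)`, and `(w n)_{n≥1}` is weakly decreasing with `w 1 ≤ 1`, then every coefficient
of `(1 + ∑_{n≥1} a n * xⁿ) / (1 + ∑_{n≥1} w n * a n * xⁿ)` in `ℝ[[x]]`
is nonnegative. -/
theorem coeff_nonneg_of_boolean_transform_nonneg' (a b w : ℕ → ℝ)
    (hb : ∀ n, 1 ≤ n → b n = a n - ∑ k ∈ Finset.Ico 1 n, a (n - k) * b k)
    (hb0 : ∀ n, 1 ≤ n → 0 ≤ b n)
    (hw : ∀ m n, 1 ≤ m → m ≤ n → w n ≤ w m) (hw1 : w 1 ≤ 1) :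
    ∀ n, 0 ≤ PowerSeries.coeff (R := ℝ) n
      ((1 + PowerSeries.mk fun i => if i = 0 then 0 else a i) *
        (1 + PowerSeries.mk fun i => if i = 0 then 0 else w i * a i)⁻¹) := by
  have hA : onePlusSeries a = (onePlusSeries (-b))⁻¹ :=
    (eq_inv_iff_mul_eq_one (by simp)).2 <| by
      rw [mul_comm]; exact onePlusSeries_neg_mul_onePlusSeries_of_boolean_transform hb
  intro n
  change 0 ≤ coeff n (onePlusSeries a * (onePlusSeries fun i => w i * a i)⁻¹)
  rw [hA, mul_comm, ← PowerSeries.mul_inv_rev]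
  exact coeff_inv_nonneg_of_coeff_nonpos (by simp)
    (fun m hm => coeff_onePlusSeries_neg_mul_weighted_nonpos hb hb0 hw hw1 hm) n
end

section
/- Let (a_n)_{n≥1} and (w_n)_{n≥1} be arbitrary real sequences, let (b_n)_{n≥1} be the Boolean transform of (a_n), and let c_n denote the n-th coefficient of the formal power series 1 − (1 + ∑_{n≥1} w_n a_n x^n)/(1 + ∑_{n≥1} a_n x^n). Then for every n ≥ 1, c_n = ∑_{k=1}^{n−1} (w_{n−k} − w_n) a_{n−k} b_k + (1 − w_n) b_n. -/
/-!
Write `A = 1 + ∑ aₙxⁿ`, `B = ∑ bₙxⁿ` and `W = ∑ wₙaₙxⁿ`. The recursion defining the Boolean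
transform says exactly `A * B = A - 1`, i.e. `A⁻¹ = 1 - B`. Hence
`1 - (1 + W) A⁻¹ = B - W + W B`, whose `n`-th coefficient is
`bₙ - wₙaₙ + ∑ w_{n-k} a_{n-k} b_k`; eliminating `aₙ` with the recursion once more gives the formula.
-/

open PowerSeries Finset

namespace PowerSeries

/-- `∑_{n ≥ 1} f n * Xⁿ`: the value `f 0` is ignored. -/
noncomputable def mkPos {R : Type*} [Semiring R] (f : ℕ → R) : R⟦X⟧ :=
  mk fun i => if i = 0 then 0 else f i

@[simp]
lemma coeff_mkPos {R : Type*} [Semiring R] (f : ℕ → R) {n : ℕ} (hn : n ≠ 0) :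
    coeff n (mkPos f) = f n := by
  simp [mkPos, hn]

@[simp]
lemma constantCoeff_mkPos {R : Type*} [Semiring R] (f : ℕ → R) : constantCoeff (mkPos f) = 0 := by
  simp [mkPos, ← coeff_zero_eq_constantCoeff_apply]

lemma coeff_mkPos_mul_mkPos {R : Type*} [CommSemiring R] (f g : ℕ → R) (n : ℕ) :
    coeff n (mkPos f * mkPos g) = ∑ k ∈ Ico 1 n, f (n - k) * g k := by
  rw [mul_comm, coeff_mul, Nat.sum_antidiagonal_eq_sum_range_succ_mk]
  dsimp only
  symm
  apply sum_subset_zero_on_sdiff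
  · intro k hk
    simp only [mem_Ico, mem_range] at hk ⊢
    omega
  · intro k hk
    simp only [mem_sdiff, mem_range, mem_Ico, not_and, not_lt] at hk
    rcases Nat.eq_zero_or_pos k with rfl | hpos
    · simp [mkPos]
    · simp [mkPos, show n - k = 0 by omega]
  · intro k hk
    simp only [mem_Ico] at hk
    rw [coeff_mkPos _ (by omega), coeff_mkPos _ (by omega), mul_comm]

variable {K : Type*} [Field K] {a b : ℕ → K}

lemma one_add_mkPos_mul_mkPos_of_boolean
    (hb : ∀ n, 1 ≤ n → b n = a n - ∑ k ∈ Ico 1 n, a (n - k) * b k) :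
    (1 + mkPos a) * mkPos b = mkPos a := by
  ext n
  rcases Nat.eq_zero_or_pos n with rfl | hn
  · simp
  · rw [add_mul, one_mul, map_add, coeff_mkPos_mul_mkPos, coeff_mkPos _ hn.ne',
      coeff_mkPos _ hn.ne', hb n hn]
    ring

lemma inv_one_add_mkPos_of_boolean
    (hb : ∀ n, 1 ≤ n → b n = a n - ∑ k ∈ Ico 1 n, a (n - k) * b k) :
    (1 + mkPos a)⁻¹ = 1 - mkPos b := by
  rw [inv_eq_iff_mul_eq_one (by simp), mul_comm, mul_sub, mul_one,
    one_add_mkPos_mul_mkPos_of_boolean hb, add_sub_cancel_right]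

end PowerSeries

/-- Let `(b n)` be the Boolean transform of `(a n)`, `(w n)` an
arbitrary real sequence, and let `c n` be the `n`-th coefficient of
`1 - (1 + ∑_{n≥1} w n * a n * xⁿ) / (1 + ∑_{n≥1} a n * xⁿ)`. Then for every `n ≥ 1`,
`c n = ∑_{k=1}^{n-1} (w (n-k) - w n) * a (n-k) * b k + (1 - w n) * b n`. -/
theorem coeff_formula_boolean_transform (a b w : ℕ → ℝ)
    (hb : ∀ n, 1 ≤ n → b n = a n - ∑ k ∈ Finset.Ico 1 n, a (n - k) * b k) :
    ∀ n, 1 ≤ n →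
      PowerSeries.coeff (R := ℝ) n
        (1 - (1 + PowerSeries.mk fun i => if i = 0 then 0 else w i * a i) *
          (1 + PowerSeries.mk fun i => if i = 0 then 0 else a i)⁻¹)
      = ∑ k ∈ Finset.Ico 1 n, (w (n - k) - w n) * a (n - k) * b k + (1 - w n) * b n := by
  intro n hn
  change coeff n (1 - (1 + mkPos (fun i => w i * a i)) * (1 + mkPos a)⁻¹) = _
  have hseries : 1 - (1 + mkPos (fun i => w i * a i)) * (1 - mkPos b) =
      mkPos b - mkPos (fun i => w i * a i) + mkPos (fun i => w i * a i) * mkPos b := by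
    ring
  rw [inv_one_add_mkPos_of_boolean hb, hseries, map_add, map_sub, coeff_mkPos _ (by omega),
    coeff_mkPos _ (by omega), coeff_mkPos_mul_mkPos]
  simp only [sub_mul, sum_sub_distrib, mul_assoc, ← mul_sum]
  linear_combination (w n) * hb n hn
end

section
/- Let (a_n)_{n≥1} and (b_n)_{n≥1} be real sequences with Boolean transforms (p_n)_{n≥1} and (q_n)_{n≥1} respectively, and let (r_n)_{n≥1} be the Boolean transform of the Hadamard product sequence (a_n b_n)_{n≥1}. Then for every n ≥ 1, r_n = ∑ p_α q_β, where the sum is over all pairs (α, β) of compositions of n such that PS(α) ∩ PS(β) = ∅, i.e., such that α ∧ β = (n). -/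
/-!
Splitting off the first block shows `aₙ = ∑_{α ⊨ n} p_α`, so `aₙ bₙ = ∑ p_α q_β` over all pairs of
compositions of `n`. Cutting a pair `(α, β)` at the first block `s` of `α ∧ β`, which is its least
positive common partial sum, writes it uniquely as the concatenation of a pair of compositions of
`s` with meet `(s)` and an arbitrary pair of compositions of `n - s`. Hence
`aₙ bₙ = ∑_{s=1}^n R_s a_{n-s} b_{n-s}` (with `a₀ b₀ = 1`), where `R_s` is the claimed sum, and this
is exactly the recursion saying that `R` is the Boolean transform of `(aₙ bₙ)`.
-/

open scoped Classical

/-- The meet `α ∧ β` of two compositions of `n`: the composition whose set of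
(proper) partial sums is the intersection of those of `α` and `β`. -/
noncomputable def Composition.meet {n : ℕ} (α β : Composition n) : Composition n :=
  (compositionEquiv n).symm
    { boundaries := α.toCompositionAsSet.boundaries ∩ β.toCompositionAsSet.boundaries
      zero_mem := Finset.mem_inter.2
        ⟨α.toCompositionAsSet.zero_mem, β.toCompositionAsSet.zero_mem⟩
      getLast_mem := Finset.mem_inter.2
        ⟨α.toCompositionAsSet.getLast_mem, β.toCompositionAsSet.getLast_mem⟩ }

namespace Composition

variable {m n : ℕ}

theorem sizeUpTo_min_length (c : Composition n) (i : ℕ) :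
    c.sizeUpTo (min i c.length) = c.sizeUpTo i := by
  rcases le_total i c.length with h | h
  · rw [min_eq_left h]
  · rw [min_eq_right h, c.sizeUpTo_length, c.sizeUpTo_ofLength_le i h]

theorem sizeUpTo_cast (c : Composition m) (h : m = n) (i : ℕ) :
    (c.cast h).sizeUpTo i = c.sizeUpTo i := rfl

theorem sizeUpTo_append (c₁ : Composition m) (c₂ : Composition n) (i : ℕ) :
    (c₁.append c₂).sizeUpTo i = c₁.sizeUpTo i + c₂.sizeUpTo (i - c₁.length) := by
  simp [sizeUpTo, List.take_append]

theorem sizeUpTo_one_append (hm : 0 < m) (c₁ : Composition m) (c₂ : Composition n) :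
    (c₁.append c₂).sizeUpTo 1 = c₁.sizeUpTo 1 := by
  have := c₁.length_pos_iff.2 hm
  rw [sizeUpTo_append, Nat.sub_eq_zero_of_le this, sizeUpTo_zero, add_zero]

theorem sizeUpTo_one_mem_Icc (hn : 0 < n) (c : Composition n) : c.sizeUpTo 1 ∈ Finset.Icc 1 n := by
  have := c.sizeUpTo_strict_mono (c.length_pos_iff.2 hn)
  simp only [sizeUpTo_zero] at this
  exact Finset.mem_Icc.2 ⟨this, c.sizeUpTo_le 1⟩

theorem sizeUpTo_one_eq_iff_length_eq_one (hn : 0 < n) (c : Composition n) :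
    c.sizeUpTo 1 = n ↔ c.length = 1 := by
  refine ⟨fun h => ?_, fun h => h ▸ c.sizeUpTo_length⟩
  have := c.length_pos_iff.2 hn
  by_contra hne
  have := c.sizeUpTo_strict_mono (i := 1) (by omega)
  have := c.sizeUpTo_le (1 + 1)
  omega

theorem sizeUpTo_one_cast_append_eq_iff {k : ℕ} (hm : 0 < m) (h : m + n = k)
    (c₁ : Composition m) (c₂ : Composition n) :
    ((c₁.append c₂).cast h).sizeUpTo 1 = m ↔ c₁.length = 1 := by
  rw [sizeUpTo_cast, sizeUpTo_one_append hm, sizeUpTo_one_eq_iff_length_eq_one hm]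

theorem cast_inj {c d : Composition m} (h : m = n) : c.cast h = d.cast h ↔ c = d := by
  subst h; simp

/-- Unlike the paper's `PS(c)`, this contains `0` and `n`. -/
def partialSums (c : Composition n) : Set ℕ := Set.range c.sizeUpTo

theorem sizeUpTo_mem_partialSums (c : Composition n) (i : ℕ) : c.sizeUpTo i ∈ c.partialSums :=
  ⟨i, rfl⟩

theorem zero_mem_partialSums (c : Composition n) : 0 ∈ c.partialSums := ⟨0, c.sizeUpTo_zero⟩

theorem mem_partialSums_self (c : Composition n) : n ∈ c.partialSums :=
  ⟨c.length, c.sizeUpTo_length⟩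

theorem le_of_mem_partialSums {c : Composition n} {j : ℕ} (hj : j ∈ c.partialSums) : j ≤ n := by
  obtain ⟨i, rfl⟩ := hj
  exact c.sizeUpTo_le i

theorem mem_boundaries_iff_mem_partialSums (c : Composition n) (j : Fin (n + 1)) :
    j ∈ c.boundaries ↔ (j : ℕ) ∈ c.partialSums := by
  refine ⟨fun hj => ?_, fun ⟨i, hi⟩ => ?_⟩
  · obtain ⟨i, -, rfl⟩ := Finset.mem_map.1 hj
    exact ⟨i, rfl⟩
  · refine Finset.mem_map.2 ⟨⟨min i c.length, by omega⟩, Finset.mem_univ _, Fin.ext ?_⟩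
    simp [boundary, sizeUpTo_min_length, hi]

theorem partialSums_injective : Function.Injective (partialSums : Composition n → Set ℕ) := by
  intro c d h
  apply (compositionEquiv n).injective
  ext j
  simp [compositionEquiv, mem_boundaries_iff_mem_partialSums, h]

theorem partialSums_append (c₁ : Composition m) (c₂ : Composition n) :
    (c₁.append c₂).partialSums = c₁.partialSums ∪ (m + ·) '' c₂.partialSums := by
  ext j
  simp only [partialSums, Set.mem_union, Set.mem_range, Set.mem_image]
  constructor
  · rintro ⟨i, rfl⟩
    rw [sizeUpTo_append]
    rcases le_total i c₁.length with h | h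
    · exact Or.inl ⟨i, by simp [Nat.sub_eq_zero_of_le h]⟩
    · exact Or.inr ⟨_, ⟨_, rfl⟩, by rw [c₁.sizeUpTo_ofLength_le i h]⟩
  · rintro (⟨i, rfl⟩ | ⟨_, ⟨i, rfl⟩, rfl⟩)
    · exact ⟨min i c₁.length, by simp [sizeUpTo_append, sizeUpTo_min_length]⟩
    · exact ⟨c₁.length + i, by simp [sizeUpTo_append, c₁.sizeUpTo_ofLength_le]⟩

theorem exists_eq_cast_append {c : Composition n} {s t : ℕ} (h : s + t = n)
    (hs : s ∈ c.partialSums) :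
    ∃ (c₁ : Composition s) (c₂ : Composition t), c = (c₁.append c₂).cast h := by
  obtain ⟨i, rfl⟩ := hs
  have hsum := c.blocks_sum
  rw [← List.take_append_drop i c.blocks, List.sum_append] at hsum
  refine ⟨⟨c.blocks.take i, fun hx => c.blocks_pos (List.mem_of_mem_take hx), rfl⟩,
    ⟨c.blocks.drop i, fun hx => c.blocks_pos (List.mem_of_mem_drop hx), ?_⟩, ?_⟩
  · rw [sizeUpTo] at h; omega
  · ext1; simp

variable {c₁ d₁ : Composition m} {c₂ d₂ : Composition n}

theorem mem_partialSums_append_of_le {j : ℕ} (hj : j ≤ m) :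
    j ∈ (c₁.append c₂).partialSums ↔ j ∈ c₁.partialSums := by
  rw [partialSums_append, Set.mem_union, or_iff_left_iff_imp]
  rintro ⟨k, -, rfl⟩
  obtain rfl : k = 0 := by simp only at hj; omega
  simpa using c₁.mem_partialSums_self

theorem add_mem_partialSums_append {k : ℕ} :
    m + k ∈ (c₁.append c₂).partialSums ↔ k ∈ c₂.partialSums := by
  rw [partialSums_append, Set.mem_union, (add_right_injective m).mem_set_image]
  refine or_iff_right_of_imp fun hk => ?_
  obtain rfl : k = 0 := by have := le_of_mem_partialSums hk; omega
  exact c₂.zero_mem_partialSums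

theorem append_inj : c₁.append c₂ = d₁.append d₂ ↔ c₁ = d₁ ∧ c₂ = d₂ := by
  refine ⟨fun h => ⟨partialSums_injective ?_, partialSums_injective ?_⟩, fun h => h.1 ▸ h.2 ▸ rfl⟩
  · ext j
    by_cases hj : j ≤ m
    · rw [← mem_partialSums_append_of_le (c₂ := c₂) hj, h, mem_partialSums_append_of_le hj]
    · exact iff_of_false (mt le_of_mem_partialSums hj) (mt le_of_mem_partialSums hj)
  · ext k
    rw [← add_mem_partialSums_append (c₁ := c₁), h, add_mem_partialSums_append]

theorem boundaries_meet (α β : Composition n) :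
    (α.meet β).boundaries = α.boundaries ∩ β.boundaries :=
  CompositionAsSet.toComposition_boundaries _

theorem partialSums_meet (α β : Composition n) :
    (α.meet β).partialSums = α.partialSums ∩ β.partialSums := by
  ext j
  by_cases hj : j ≤ n
  · have h := (α.meet β).mem_boundaries_iff_mem_partialSums ⟨j, by omega⟩
    rw [boundaries_meet, Finset.mem_inter, mem_boundaries_iff_mem_partialSums,
      mem_boundaries_iff_mem_partialSums] at h
    exact h.symm
  · exact iff_of_false (fun h => hj (le_of_mem_partialSums h))
      (fun h => hj (le_of_mem_partialSums h.1))

theorem meet_cast (α β : Composition m) (h : m = n) :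
    (α.cast h).meet (β.cast h) = (α.meet β).cast h := by
  subst h; rfl

theorem meet_append (α₁ β₁ : Composition m) (α₂ β₂ : Composition n) :
    (α₁.append α₂).meet (β₁.append β₂) = (α₁.meet β₁).append (α₂.meet β₂) := by
  apply partialSums_injective
  ext j
  rcases le_or_gt j m with hj | hj
  · simp only [partialSums_meet, Set.mem_inter_iff, mem_partialSums_append_of_le hj]
  · obtain ⟨k, rfl⟩ := Nat.exists_eq_add_of_le hj.le
    simp only [partialSums_meet, Set.mem_inter_iff, add_mem_partialSums_append]

end Composition

open Finset

section CompositionSums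

variable {R : Type*} [CommSemiring R] (p q : ℕ → R)

noncomputable def compositionSum (n : ℕ) : R :=
  ∑ c : Composition n, (c.blocks.map p).prod

noncomputable def meetSingleSum (n : ℕ) : R :=
  ∑ x : Composition n × Composition n,
    if (x.1.meet x.2).length = 1 then (x.1.blocks.map p).prod * (x.2.blocks.map q).prod else 0

theorem compositionSum_zero : compositionSum p 0 = 1 := by
  rw [compositionSum, sum_eq_card_nsmul (b := 1) fun c _ => by simp [c.blocks_eq_nil.2 rfl]]
  simp [composition_card]

theorem compositionSum_mul_compositionSum (n : ℕ) :
    compositionSum p n * compositionSum q n =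
      ∑ x : Composition n × Composition n, (x.1.blocks.map p).prod * (x.2.blocks.map q).prod := by
  rw [compositionSum, compositionSum, sum_mul_sum, ← sum_product', univ_product_univ]

theorem compositionSum_eq_sum_Icc {n : ℕ} (hn : 0 < n) :
    compositionSum p n = ∑ k ∈ Icc 1 n, p k * compositionSum p (n - k) := by
  rw [compositionSum, ← sum_fiberwise_of_maps_to (g := fun c : Composition n => c.sizeUpTo 1)
    fun c _ => c.sizeUpTo_one_mem_Icc hn]
  refine sum_congr rfl fun k hk => ?_
  obtain ⟨hk, hkn⟩ := mem_Icc.1 hk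
  rw [compositionSum, mul_sum]
  symm
  refine sum_bij (fun c _ => ((Composition.single k hk).append c).cast (Nat.add_sub_of_le hkn))
    ?_ ?_ ?_ ?_
  · intro c _
    rw [mem_filter, Composition.sizeUpTo_one_cast_append_eq_iff hk]
    exact ⟨mem_univ _, Composition.single_length hk⟩
  · intro c _ d _ h
    exact (Composition.append_inj.1 ((Composition.cast_inj _).1 h)).2
  · intro c hc
    have hk' : k ∈ c.partialSums := (mem_filter.1 hc).2 ▸ c.sizeUpTo_mem_partialSums 1
    obtain ⟨c₁, c₂, rfl⟩ := Composition.exists_eq_cast_append (Nat.add_sub_of_le hkn) hk'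
    rw [mem_filter, Composition.sizeUpTo_one_cast_append_eq_iff hk,
      ← Composition.eq_single_iff_length hk] at hc
    exact ⟨c₂, mem_univ _, by rw [hc.2]⟩
  · intro c _
    simp

theorem compositionSum_mul_eq_sum_Icc {n : ℕ} (hn : 0 < n) :
    compositionSum p n * compositionSum q n =
      ∑ s ∈ Icc 1 n,
        meetSingleSum p q s * (compositionSum p (n - s) * compositionSum q (n - s)) := by
  rw [compositionSum_mul_compositionSum, ← sum_fiberwise_of_maps_to
    (g := fun x : Composition n × Composition n => (x.1.meet x.2).sizeUpTo 1)
    fun x _ => (x.1.meet x.2).sizeUpTo_one_mem_Icc hn]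
  refine sum_congr rfl fun s hs => ?_
  obtain ⟨hs, hsn⟩ := mem_Icc.1 hs
  have h := Nat.add_sub_of_le hsn
  rw [meetSingleSum, ← sum_filter, compositionSum_mul_compositionSum, sum_mul_sum,
    ← sum_product']
  symm
  refine sum_bij (fun w _ => ((w.1.1.append w.2.1).cast h, (w.1.2.append w.2.2).cast h))
    ?_ ?_ ?_ ?_
  · rintro ⟨⟨α₁, β₁⟩, ⟨α₂, β₂⟩⟩ hw
    simp only [mem_product, mem_filter] at hw ⊢
    rw [Composition.meet_cast, Composition.meet_append,
      Composition.sizeUpTo_one_cast_append_eq_iff hs]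
    exact ⟨mem_univ _, hw.1.2⟩
  · rintro ⟨⟨α₁, β₁⟩, ⟨α₂, β₂⟩⟩ _ ⟨⟨α₁', β₁'⟩, ⟨α₂', β₂'⟩⟩ _ hw
    simp only [Prod.mk.injEq, Composition.cast_inj, Composition.append_inj] at hw ⊢
    tauto
  · rintro ⟨α, β⟩ hx
    have hs' : s ∈ α.partialSums ∩ β.partialSums := Composition.partialSums_meet α β ▸
      (mem_filter.1 hx).2 ▸ (α.meet β).sizeUpTo_mem_partialSums 1
    obtain ⟨α₁, α₂, rfl⟩ := Composition.exists_eq_cast_append h hs'.1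
    obtain ⟨β₁, β₂, rfl⟩ := Composition.exists_eq_cast_append h hs'.2
    refine ⟨((α₁, β₁), (α₂, β₂)), ?_, rfl⟩
    rw [mem_filter, Composition.meet_cast, Composition.meet_append,
      Composition.sizeUpTo_one_cast_append_eq_iff hs] at hx
    simp [hx.2]
  · intro w _
    simp only [Composition.cast_blocks, Composition.append_blocks, List.map_append,
      List.prod_append]
    ring

end CompositionSums

section BooleanTransform

variable {R : Type*} [CommRing R]

def IsBooleanTransform (a p : ℕ → R) : Prop :=
  ∀ n, 1 ≤ n → p n = a n - ∑ k ∈ Ico 1 n, a (n - k) * p k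

theorem isBooleanTransform_of_eq_sum_Icc {a p : ℕ → R} (h₀ : a 0 = 1)
    (h : ∀ n, 0 < n → a n = ∑ k ∈ Icc 1 n, p k * a (n - k)) : IsBooleanTransform a p := by
  intro n hn
  rw [h n hn, ← Ico_insert_right hn, sum_insert right_notMem_Ico, Nat.sub_self, h₀]
  simp only [mul_comm (a _)]
  ring

theorem IsBooleanTransform.eq_of_left_eq {a a' p p' : ℕ → R} (h : IsBooleanTransform a p)
    (h' : IsBooleanTransform a' p') (ha : ∀ n, 1 ≤ n → a n = a' n) :
    ∀ n, 1 ≤ n → p n = p' n := by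
  intro n
  induction n using Nat.strong_induction_on with
  | _ n ih =>
    intro hn
    rw [h n hn, h' n hn, ha n hn]
    refine congrArg _ (sum_congr rfl fun k hk => ?_)
    obtain ⟨hk, hkn⟩ := mem_Ico.1 hk
    rw [ha (n - k) (by omega), ih k hkn hk]

theorem IsBooleanTransform.left_unique {a a' p : ℕ → R} (h : IsBooleanTransform a p)
    (h' : IsBooleanTransform a' p) : ∀ n, 1 ≤ n → a n = a' n := by
  intro n
  induction n using Nat.strong_induction_on with
  | _ n ih =>
    intro hn
    have hsum : ∑ k ∈ Ico 1 n, a (n - k) * p k = ∑ k ∈ Ico 1 n, a' (n - k) * p k :=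
      sum_congr rfl fun k hk => by
        obtain ⟨hk, hkn⟩ := mem_Ico.1 hk
        rw [ih (n - k) (by omega) (by omega)]
    linear_combination h' n hn - h n hn + hsum

theorem isBooleanTransform_compositionSum (p : ℕ → R) :
    IsBooleanTransform (compositionSum p) p :=
  isBooleanTransform_of_eq_sum_Icc (compositionSum_zero p) fun _ => compositionSum_eq_sum_Icc p

theorem isBooleanTransform_compositionSum_mul (p q : ℕ → R) :
    IsBooleanTransform (fun n => compositionSum p n * compositionSum q n) (meetSingleSum p q) :=
  isBooleanTransform_of_eq_sum_Icc (by simp [compositionSum_zero])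
    fun _ => compositionSum_mul_eq_sum_Icc p q

end BooleanTransform

/-- If `(p n)`, `(q n)`, `(r n)` are the Boolean transforms of the
real sequences `(a n)`, `(b n)` and of their Hadamard product `(a n * b n)`
respectively, then for every `n ≥ 1`,
`r n = ∑ p_α q_β`, the sum over all pairs `(α, β)` of compositions of `n` whose
meet is the one-block composition `(n)` (equivalently, `PS(α) ∩ PS(β) = ∅`). -/
theorem boolean_transform_hadamard (a b p q r : ℕ → ℝ)
    (hp : ∀ n, 1 ≤ n → p n = a n - ∑ k ∈ Finset.Ico 1 n, a (n - k) * p k)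
    (hq : ∀ n, 1 ≤ n → q n = b n - ∑ k ∈ Finset.Ico 1 n, b (n - k) * q k)
    (hr : ∀ n, 1 ≤ n → r n = a n * b n - ∑ k ∈ Finset.Ico 1 n, (a (n - k) * b (n - k)) * r k) :
    ∀ n (hn : 1 ≤ n),
      r n = ∑ x : Composition n × Composition n,
        if x.1.meet x.2 = Composition.single n hn then
          (x.1.blocks.map p).prod * (x.2.blocks.map q).prod
        else 0 := by
  intro n hn
  have ha : ∀ m, 1 ≤ m → a m = compositionSum p m :=
    IsBooleanTransform.left_unique hp (isBooleanTransform_compositionSum p)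
  have hb : ∀ m, 1 ≤ m → b m = compositionSum q m :=
    IsBooleanTransform.left_unique hq (isBooleanTransform_compositionSum q)
  have hab : ∀ m, 1 ≤ m → a m * b m = compositionSum p m * compositionSum q m :=
    fun m hm => by rw [ha m hm, hb m hm]
  rw [IsBooleanTransform.eq_of_left_eq hr (isBooleanTransform_compositionSum_mul p q) hab n hn,
    meetSingleSum]
  exact sum_congr rfl fun x _ => if_congr (Composition.eq_single_iff_length hn).symm rfl rfl
end
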